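/- arXiv:cs/0702113 — 7 statements merged into one kernel-verified Lean document; each statement's English description precedes it below -/
import Mathlib

section
/- Let G = (V, E) be a finite connected undirected simple graph and let e, f be two distinct edges, neither of which is a cut edge. If {e, f} is a cut pair, then every binary circulation of G contains either both of e, f or neither of them. If {e, f} is not a cut pair, then exactly half of the binary circulations of G contain exactly one of e and f. -/
open scoped Classical symmDiff

noncomputable section

variable {V : Type*}

/-- The induced edge cut `δ(S)`: the edges of `G` with exactly one endpoint in `S`. -/
def edgeCut [Fintype V] (G : SimpleGraph V) (S : Set V) : Finset (Sym2 V) :=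
  G.edgeFinset.filter fun e => ∀ u v : V, e = s(u, v) → (u ∈ S ↔ v ∉ S)

/-- `φ` is a binary circulation of `G`: a set of edges of `G` in which every vertex
has even degree. -/
def IsCirculation [Fintype V] (G : SimpleGraph V) (φ : Finset (Sym2 V)) : Prop :=
  ↑φ ⊆ G.edgeSet ∧ ∀ v : V, Even ((φ.filter fun e => v ∈ e).card)

/-- The characteristic vector of an edge set, as an element of `(ZMod 2)^E`. -/
def chi [Fintype V] (G : SimpleGraph V) (F : Finset (Sym2 V)) : G.edgeSet → ZMod 2 :=
  fun e => if ↑e ∈ F then 1 else 0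

/-- `e` is a cut edge of `G`: removing it disconnects `G`. -/
def IsCutEdge (G : SimpleGraph V) (e : Sym2 V) : Prop :=
  e ∈ G.edgeSet ∧ ¬(G.deleteEdges {e}).Connected

/-- `{e, f}` is a cut pair of `G`: two distinct edges, neither a cut edge, whose
joint removal disconnects `G`. -/
def IsCutPair (G : SimpleGraph V) (e f : Sym2 V) : Prop :=
  e ≠ f ∧ e ∈ G.edgeSet ∧ f ∈ G.edgeSet ∧ ¬IsCutEdge G e ∧ ¬IsCutEdge G f ∧
    ¬(G.deleteEdges {e, f}).Connected

/-- `v` is a cut vertex of `G`: deleting `v` and its incident edges disconnects `G`. -/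
def IsCutVertex (G : SimpleGraph V) (v : V) : Prop :=
  ¬(G.induce {u | u ≠ v}).Connected

/-- `T` is a spanning tree of `G`. -/
def IsSpanningTree (G T : SimpleGraph V) : Prop := T ≤ G ∧ T.IsTree

/-- `K` is a cut class of `G`: an inclusion-maximal set of more than one edge,
every two of which form a cut pair. -/
def IsCutClass (G : SimpleGraph V) (K : Finset (Sym2 V)) : Prop :=
  1 < K.card ∧ (∀ e ∈ K, ∀ f ∈ K, e ≠ f → IsCutPair G e f) ∧
    ∀ K' : Finset (Sym2 V), K ⊆ K' →
      (1 < K'.card ∧ ∀ e ∈ K', ∀ f ∈ K', e ≠ f → IsCutPair G e f) → K' = K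

/-! A circulation meets every edge cut `δ(S)` in an even number of edges: modulo 2 this number
is the sum of the degrees of the vertices of `S`. If `{e, f}` is a cut pair, the vertices
reachable from one vertex in `G - e - f` form a set `S` with `δ(S) = {e, f}`: no other edge
crosses `S`, and each of `e, f` must, as neither alone is a cut edge. Otherwise a path in
`G - e - f` between the ends of `e` closes a cycle `ψ` through `e` avoiding `f`, and
`φ ↦ φ ∆ ψ` exchanges the circulations containing exactly one of `e, f` with the others. -/

namespace Finset

theorem even_card_symmDiff {α : Type*} [DecidableEq α] {s t : Finset α}
    (hs : Even s.card) (ht : Even t.card) : Even (s ∆ t).card := by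
  have hst := card_sdiff_add_card_inter s t
  have hts := card_sdiff_add_card_inter t s
  rw [inter_comm] at hts
  rw [symmDiff_def, sup_eq_union, card_union_of_disjoint disjoint_sdiff_sdiff]
  rw [Nat.even_iff] at *
  omega

theorem filter_symmDiff {α : Type*} [DecidableEq α] (s t : Finset α) (p : α → Prop)
    [DecidablePred p] : (s ∆ t).filter p = s.filter p ∆ t.filter p := by
  ext x
  simp only [mem_symmDiff, mem_filter]
  tauto

theorem even_card_inter_pair_iff {α : Type*} [DecidableEq α] {s : Finset α} {a b : α}
    (hab : a ≠ b) : Even (s ∩ {a, b}).card ↔ (a ∈ s ↔ b ∈ s) := by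
  by_cases ha : a ∈ s <;> by_cases hb : b ∈ s <;>
    simp [inter_insert_of_mem, inter_insert_of_notMem, inter_singleton_of_mem,
      inter_singleton_of_notMem, ha, hb, hab]

end Finset

theorem Set.two_mul_ncard_sep_eq_ncard {α : Type*} {s : Set α} (hs : s.Finite) {σ : α → α}
    (hσ : Function.Involutive σ) (hσs : Set.MapsTo σ s s) {p : α → Prop}
    (hp : ∀ x, p (σ x) ↔ ¬p x) : 2 * {x ∈ s | p x}.ncard = s.ncard := by
  have himage : σ '' {x ∈ s | p x} = {x ∈ s | ¬p x} := by
    ext y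
    refine ⟨?_, fun ⟨hy, hpy⟩ => ⟨σ y, ⟨hσs hy, (hp y).2 hpy⟩, hσ y⟩⟩
    rintro ⟨x, ⟨hx, hpx⟩, rfl⟩
    exact ⟨hσs hx, fun h => (hp x).1 h hpx⟩
  rw [two_mul, ← Set.ncard_inter_add_ncard_sdiff_eq_ncard s {x | p x} hs]
  congr 1
  rw [← Set.ncard_image_of_injective _ hσ.injective, himage]
  rfl

theorem cast_card_filter_mem_mk {T : Finset V} {u v : V} (huv : u ≠ v) :
    ((T.filter (· ∈ s(u, v))).card : ZMod 2) = if (u ∈ T ↔ v ∉ T) then 1 else 0 := by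
  have : T.filter (· ∈ s(u, v)) = ({u, v} : Finset V).filter (· ∈ T) := by
    ext; simp [and_comm]
  rw [this, Finset.filter_insert, Finset.filter_singleton]
  by_cases hu : u ∈ T <;> by_cases hv : v ∈ T <;> simp [hu, hv, huv]
  decide

section
variable [Fintype V] {G : SimpleGraph V}

theorem mk_mem_edgeCut {S : Set V} {u v : V} :
    s(u, v) ∈ edgeCut G S ↔ G.Adj u v ∧ (u ∈ S ↔ v ∉ S) := by
  simp only [edgeCut, Finset.mem_filter, SimpleGraph.mem_edgeFinset, SimpleGraph.mem_edgeSet]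
  refine and_congr_right fun _ => ⟨fun h => h u v rfl, fun h a b hab => ?_⟩
  rcases Sym2.eq_iff.mp hab with ⟨rfl, rfl⟩ | ⟨rfl, rfl⟩ <;> tauto

theorem IsCirculation.symmDiff {φ ψ : Finset (Sym2 V)} (hφ : IsCirculation G φ)
    (hψ : IsCirculation G ψ) : IsCirculation G (φ ∆ ψ) := by
  refine ⟨fun x hx => ?_, fun v => ?_⟩
  · rcases Finset.mem_symmDiff.mp hx with ⟨hx, -⟩ | ⟨hx, -⟩
    exacts [hφ.1 hx, hψ.1 hx]
  · rw [Finset.filter_symmDiff]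
    exact Finset.even_card_symmDiff (hφ.2 v) (hψ.2 v)

theorem IsCirculation.mono {H : SimpleGraph V} {φ : Finset (Sym2 V)} (hHG : H ≤ G)
    (hφ : IsCirculation H φ) : IsCirculation G φ :=
  ⟨hφ.1.trans (SimpleGraph.edgeSet_mono hHG), hφ.2⟩

theorem IsCirculation.even_card_inter_edgeCut {φ : Finset (Sym2 V)} (hφ : IsCirculation G φ)
    (S : Set V) : Even (φ ∩ edgeCut G S).card := by
  rw [← ZMod.natCast_eq_zero_iff_even]
  calc ((φ ∩ edgeCut G S).card : ZMod 2)
      = ∑ ed ∈ φ, if ed ∈ edgeCut G S then 1 else 0 := by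
        rw [Finset.sum_boole, Finset.filter_mem_eq_inter]
    _ = ∑ ed ∈ φ, ((S.toFinset.filter (· ∈ ed)).card : ZMod 2) := by
        refine Finset.sum_congr rfl fun ed hed => ?_
        induction ed with
        | _ u v =>
          have hadj : G.Adj u v := hφ.1 hed
          simp only [cast_card_filter_mem_mk hadj.ne, mk_mem_edgeCut, Set.mem_toFinset, hadj,
            true_and]
    _ = ∑ x ∈ S.toFinset, ((φ.filter (x ∈ ·)).card : ZMod 2) := by
        simp only [Finset.card_filter]
        push_cast
        exact Finset.sum_comm
    _ = 0 := Finset.sum_eq_zero fun x _ => (ZMod.natCast_eq_zero_iff_even).mpr (hφ.2 x)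

theorem SimpleGraph.Walk.IsTrail.isCirculation_edgesFinset {u : V} {c : G.Walk u u}
    (hc : c.IsTrail) : IsCirculation G hc.edgesFinset := by
  refine ⟨fun x hx => c.edges_subset_edgeSet hx, fun x => ?_⟩
  have := (hc.even_countP_edges_iff x).mpr (by simp)
  simpa [Finset.card_def, List.countP_eq_length_filter] using this

theorem coe_edgeCut_reachable_subset (F : Set (Sym2 V)) (a : V) :
    ↑(edgeCut G {x | (G.deleteEdges F).Reachable a x}) ⊆ F := by
  intro ed hed
  induction ed with
  | _ u v =>
    by_contra hF
    obtain ⟨hadj, hcross⟩ := mk_mem_edgeCut.mp hed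
    have huv : (G.deleteEdges F).Reachable u v :=
      (SimpleGraph.deleteEdges_adj.mpr ⟨hadj, hF⟩).reachable
    have hside : (G.deleteEdges F).Reachable a u ↔ (G.deleteEdges F).Reachable a v :=
      ⟨fun h => h.trans huv, fun h => h.trans huv.symm⟩
    exact iff_not_self (hside.symm.trans hcross)

theorem not_coe_edgeCut_subset_of_connected {F : Set (Sym2 V)}
    (hF : (G.deleteEdges F).Connected) {S : Set V} {a b : V} (ha : a ∈ S) (hb : b ∉ S) :
    ¬↑(edgeCut G S) ⊆ F := by
  intro hsub
  have hclosed : ∀ u v, (G.deleteEdges F).Adj u v → u ∈ S → v ∈ S := by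
    intro u v huv hu
    by_contra hv
    rw [SimpleGraph.deleteEdges_adj] at huv
    exact huv.2 (hsub (mk_mem_edgeCut.mpr ⟨huv.1, iff_of_true hu hv⟩))
  have hwalk : ∀ {x y : V} (w : (G.deleteEdges F).Walk x y), x ∈ S → y ∈ S := by
    intro x y w
    induction w with
    | nil => exact id
    | cons h _ ih => exact fun hx => ih (hclosed _ _ h hx)
  obtain ⟨w⟩ := hF.preconnected a b
  exact hb (hwalk w ha)

theorem mem_edgeCut_of_subset_pair {S : Set V} {a b : V} (ha : a ∈ S) (hb : b ∉ S)
    {g g' : Sym2 V} (hsub : ↑(edgeCut G S) ⊆ ({g, g'} : Set (Sym2 V)))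
    (hconn : (G.deleteEdges {g'}).Connected) : g ∈ edgeCut G S := by
  obtain ⟨x, hx, hxg'⟩ := Set.not_subset.mp (not_coe_edgeCut_subset_of_connected hconn ha hb)
  rcases hsub hx with rfl | rfl
  · exact hx
  · exact absurd rfl hxg'

theorem IsCutPair.exists_edgeCut_eq {e f : Sym2 V} (h : IsCutPair G e f) :
    ∃ S : Set V, edgeCut G S = {e, f} := by
  obtain ⟨-, he, hf, hce, hcf, hdisc⟩ := h
  have : Nonempty V := e.inductionOn fun u _ => ⟨u⟩
  obtain ⟨a, b, hab⟩ : ∃ a b, ¬(G.deleteEdges {e, f}).Reachable a b := by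
    by_contra! h
    exact hdisc ⟨fun a b => h a b⟩
  set S := {x | (G.deleteEdges {e, f}).Reachable a x}
  have ha : a ∈ S := SimpleGraph.Reachable.refl a
  have hsub : ↑(edgeCut G S) ⊆ ({e, f} : Set (Sym2 V)) := coe_edgeCut_reachable_subset _ a
  refine ⟨S, Finset.coe_injective ?_⟩
  push_cast
  refine hsub.antisymm ?_
  have heS := mem_edgeCut_of_subset_pair ha hab hsub (not_not.mp fun hc => hcf ⟨hf, hc⟩)
  have hfS := mem_edgeCut_of_subset_pair ha hab (Set.pair_comm e f ▸ hsub)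
    (not_not.mp fun hc => hce ⟨he, hc⟩)
  simpa [Set.insert_subset_iff] using ⟨heS, hfS⟩

theorem IsCutPair.mem_iff_mem_of_isCirculation {e f : Sym2 V} {φ : Finset (Sym2 V)}
    (h : IsCutPair G e f) (hφ : IsCirculation G φ) : e ∈ φ ↔ f ∈ φ := by
  obtain ⟨S, hS⟩ := h.exists_edgeCut_eq
  rw [← Finset.even_card_inter_pair_iff h.1, ← hS]
  exact hφ.even_card_inter_edgeCut S

theorem exists_isCirculation_mem_not_mem {u v : V} {f : Sym2 V} (hadj : G.Adj u v)
    (hf : f ≠ s(u, v)) (hr : (G.deleteEdges {s(u, v), f}).Reachable u v) :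
    ∃ ψ, IsCirculation G ψ ∧ s(u, v) ∈ ψ ∧ f ∉ ψ := by
  set H := G.deleteEdges {f}
  have hH : H.Adj u v ∧ (H.deleteEdges {s(u, v)}).Reachable u v := by
    refine ⟨SimpleGraph.deleteEdges_adj.mpr ⟨hadj, hf.symm⟩, ?_⟩
    rwa [SimpleGraph.deleteEdges_deleteEdges, Set.singleton_union, Set.pair_comm]
  obtain ⟨w, c, hc, hmem⟩ := SimpleGraph.adj_and_reachable_delete_edges_iff_exists_cycle.mp hH
  refine ⟨hc.isTrail.edgesFinset, hc.isTrail.isCirculation_edgesFinset.mono (G.deleteEdges_le _),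
    hmem, fun hfc => ?_⟩
  simpa [H] using c.edges_subset_edgeSet hfc

end

theorem cutPair_circulation_dichotomy_general [Fintype V] (G : SimpleGraph V)
    (e f : Sym2 V) (hef : e ≠ f) (he : e ∈ G.edgeSet) (hf : f ∈ G.edgeSet)
    (hce : ¬IsCutEdge G e) (hcf : ¬IsCutEdge G f) :
    (IsCutPair G e f → ∀ φ : Finset (Sym2 V), IsCirculation G φ → (e ∈ φ ↔ f ∈ φ)) ∧
    (¬IsCutPair G e f →
      2 * Set.ncard {φ : Finset (Sym2 V) | IsCirculation G φ ∧ Xor' (e ∈ φ) (f ∈ φ)}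
        = Set.ncard {φ : Finset (Sym2 V) | IsCirculation G φ}) := by
  refine ⟨fun hcp φ hφ => hcp.mem_iff_mem_of_isCirculation hφ, fun hncp => ?_⟩
  have hconn : (G.deleteEdges {e, f}).Connected :=
    not_not.mp fun h => hncp ⟨hef, he, hf, hce, hcf, h⟩
  obtain ⟨ψ, hψ, heψ, hfψ⟩ : ∃ ψ, IsCirculation G ψ ∧ e ∈ ψ ∧ f ∉ ψ := by
    induction e with
    | _ u v => exact exists_isCirculation_mem_not_mem he hef.symm (hconn.preconnected u v)
  refine Set.two_mul_ncard_sep_eq_ncard (s := {φ | IsCirculation G φ}) (σ := (· ∆ ψ))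
    (Set.toFinite _) (fun χ => symmDiff_symmDiff_cancel_right ψ χ)
    (fun χ hχ => IsCirculation.symmDiff hχ hψ) fun χ => ?_
  simp only [Finset.mem_symmDiff, heψ, hfψ, Xor', Xor]
  tauto

/-- Let `e, f` be two distinct non-cut edges of a finite connected
simple graph. If `{e, f}` is a cut pair, then every binary circulation contains both
or neither of `e, f`; if not, then exactly half of the binary circulations contain
exactly one of `e` and `f`. -/
theorem cutPair_circulation_dichotomy [Fintype V] (G : SimpleGraph V) (hG : G.Connected)
    (e f : Sym2 V) (hef : e ≠ f) (he : e ∈ G.edgeSet) (hf : f ∈ G.edgeSet)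
    (hce : ¬IsCutEdge G e) (hcf : ¬IsCutEdge G f) :
    (IsCutPair G e f → ∀ φ : Finset (Sym2 V), IsCirculation G φ → (e ∈ φ ↔ f ∈ φ)) ∧
    (¬IsCutPair G e f →
      2 * Set.ncard {φ : Finset (Sym2 V) | IsCirculation G φ ∧ Xor' (e ∈ φ) (f ∈ φ)}
        = Set.ncard {φ : Finset (Sym2 V) | IsCirculation G φ}) :=
  cutPair_circulation_dichotomy_general G e f hef he hf hce hcf
end
end

section
/- Let G = (V, E) be a finite connected undirected simple graph and let e, f, g be three distinct edges. If {e, f} is a cut pair and {f, g} is a cut pair, then {e, g} is a cut pair (the cut-pair relation is transitive). -/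
open scoped Classical symmDiff

noncomputable section

variable {V : Type*}

/-! A cut pair `{e, f}` is an edge cut: if `S` is the set of vertices reachable from `x` in
`G - e - f`, where `x` does not reach every vertex, then `δ(S) ⊆ {e, f}`, and `δ(S)` contains
both edges because neither is a bridge. Edge cuts are closed under symmetric difference,
`δ(S ∆ T) = δ(S) ∆ δ(T)`, so `δ(S) = {e, f}` and `δ(T) = {f, g}` give `δ(S ∆ T) = {e, g}`; and
deleting a nonempty edge cut disconnects the graph. -/

section EdgeCut

variable [Fintype V] {G : SimpleGraph V} {S : Set V}

theorem mem_edgeCut_mk {u v : V} :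
    s(u, v) ∈ edgeCut G S ↔ G.Adj u v ∧ (u ∈ S ↔ v ∉ S) := by
  simp only [edgeCut, Finset.mem_filter, SimpleGraph.mem_edgeFinset, SimpleGraph.mem_edgeSet,
    Sym2.eq_iff]
  refine and_congr_right fun _ => ⟨fun h => h u v (.inl ⟨rfl, rfl⟩), ?_⟩
  rintro h a b (⟨rfl, rfl⟩ | ⟨rfl, rfl⟩) <;> tauto

theorem edgeCut_symmDiff (T : Set V) : edgeCut G (S ∆ T) = edgeCut G S ∆ edgeCut G T := by
  ext h
  induction h using Sym2.ind with
  | _ u v =>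
    simp only [Finset.mem_symmDiff, mem_edgeCut_mk, Set.mem_symmDiff]
    tauto

theorem mem_iff_mem_of_reachable_deleteEdges {F : Set (Sym2 V)} (hF : ↑(edgeCut G S) ⊆ F)
    {x y : V} (hxy : (G.deleteEdges F).Reachable x y) : x ∈ S ↔ y ∈ S := by
  obtain ⟨w⟩ := hxy
  induction w with
  | nil => rfl
  | @cons u v _ huv _ ih =>
    rw [SimpleGraph.deleteEdges_adj] at huv
    have hcut : s(u, v) ∉ edgeCut G S := fun h => huv.2 (hF h)
    rw [mem_edgeCut_mk] at hcut
    rw [← ih]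
    tauto

theorem not_connected_deleteEdges_of_mem_of_notMem {F : Set (Sym2 V)}
    (hF : ↑(edgeCut G S) ⊆ F) {x y : V} (hx : x ∈ S) (hy : y ∉ S) :
    ¬(G.deleteEdges F).Connected := fun hconn =>
  hy ((mem_iff_mem_of_reachable_deleteEdges hF (hconn.preconnected x y)).mp hx)

theorem not_connected_deleteEdges_edgeCut {e : Sym2 V} (he : e ∈ edgeCut G S) :
    ¬(G.deleteEdges ↑(edgeCut G S)).Connected := by
  induction e using Sym2.ind with
  | _ u v =>
    have huv := (mem_edgeCut_mk.mp he).2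
    by_cases hu : u ∈ S
    · exact not_connected_deleteEdges_of_mem_of_notMem subset_rfl hu (huv.mp hu)
    · exact not_connected_deleteEdges_of_mem_of_notMem subset_rfl (not_not.mp (mt huv.mpr hu)) hu

end EdgeCut

theorem Finset.pair_symmDiff_pair {α : Type*} [DecidableEq α] {a b c : α} (hab : a ≠ b)
    (hbc : b ≠ c) (hac : a ≠ c) : ({a, b} : Finset α) ∆ {b, c} = {a, c} := by
  ext x
  simp only [Finset.mem_symmDiff, Finset.mem_insert, Finset.mem_singleton]
  grind

theorem exists_edgeCut_eq_of_isCutPair [Fintype V] {G : SimpleGraph V} {e f : Sym2 V}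
    (hef : IsCutPair G e f) : ∃ S : Set V, edgeCut G S = {e, f} := by
  obtain ⟨-, he, hf, hce, hcf, hdisc⟩ := hef
  have : Nonempty V := by
    induction e using Sym2.ind with
    | _ u _ => exact ⟨u⟩
  obtain ⟨x, y, hxy⟩ : ∃ x y, ¬(G.deleteEdges {e, f}).Reachable x y := by
    simpa [SimpleGraph.connected_iff, SimpleGraph.Preconnected] using hdisc
  set S : Set V := {v | (G.deleteEdges {e, f}).Reachable x v}
  refine ⟨S, ?_⟩
  have hx : x ∈ S := SimpleGraph.Reachable.refl x
  have hcut : edgeCut G S ⊆ {e, f} := by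
    intro h hh
    induction h using Sym2.ind with
    | _ u v =>
      rw [mem_edgeCut_mk] at hh
      by_contra hne
      have hadj : (G.deleteEdges {e, f}).Adj u v := by
        simpa [SimpleGraph.deleteEdges_adj, hh.1] using hne
      have hu : u ∈ S ↔ v ∈ S := ⟨fun hu => hu.trans hadj.reachable,
        fun hv => hv.trans hadj.symm.reachable⟩
      tauto
  have hcross : ∀ {b}, b ∈ G.edgeSet → ¬IsCutEdge G b → ¬edgeCut G S ⊆ {b} :=
    fun hb hcb hsub =>
      hcb ⟨hb, not_connected_deleteEdges_of_mem_of_notMem (by exact_mod_cast hsub) hx hxy⟩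
  have heS : e ∈ edgeCut G S := by
    by_contra h
    exact hcross hf hcf ((Finset.subset_insert_iff_of_notMem h).mp hcut)
  have hfS : f ∈ edgeCut G S := by
    by_contra h
    rw [Finset.pair_comm] at hcut
    exact hcross he hce ((Finset.subset_insert_iff_of_notMem h).mp hcut)
  exact hcut.antisymm (Finset.insert_subset heS (Finset.singleton_subset_iff.mpr hfS))

theorem cutPair_trans_general [Fintype V] (G : SimpleGraph V)
    (e f g : Sym2 V) (heg : e ≠ g)
    (hef : IsCutPair G e f) (hfg : IsCutPair G f g) :
    IsCutPair G e g := by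
  obtain ⟨S, hS⟩ := exists_edgeCut_eq_of_isCutPair hef
  obtain ⟨T, hT⟩ := exists_edgeCut_eq_of_isCutPair hfg
  have hST : edgeCut G (S ∆ T) = {e, g} := by
    rw [edgeCut_symmDiff, hS, hT, Finset.pair_symmDiff_pair hef.1 hfg.1 heg]
  refine ⟨heg, hef.2.1, hfg.2.2.1, hef.2.2.2.1, hfg.2.2.2.2.1, ?_⟩
  rw [← Finset.coe_pair, ← hST]
  exact not_connected_deleteEdges_edgeCut (hST ▸ Finset.mem_insert_self e {g})

/-- Transitivity of cut pairs: if `{e, f}` and `{f, g}` are cut pairs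
of a finite connected simple graph, then so is `{e, g}`. -/
theorem cutPair_trans [Fintype V] (G : SimpleGraph V) (hG : G.Connected)
    (e f g : Sym2 V) (heg : e ≠ g)
    (hef : IsCutPair G e f) (hfg : IsCutPair G f g) :
    IsCutPair G e g :=
  cutPair_trans_general G e f g heg hef hfg

end
end

section
/- Let G = (V, E) be a finite connected undirected simple graph and v ∈ V. Then v is a cut vertex of G if and only if the edge set δ(v) properly contains a nonempty induced edge cut of G, i.e., there exists S ⊆ V with ∅ ≠ δ(S) ⊊ δ(v). -/
open scoped Classical symmDiff

noncomputable section

variable {V : Type*}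

/-! If `v` is a cut vertex, let `S` be the component of some vertex in `G - v`. Every edge
leaving `S` ends at `v`, so `δ(S) ⊆ δ(v)`; `δ(S)` is nonempty because `G` is connected, and the
first edge of a path from `v` to a vertex outside `S ∪ {v}` lies in `δ(v) \ δ(S)`.

Conversely, `δ(Sᶜ) = δ(S)` lets us assume `v ∉ S`, and then `δ(S) ⊆ δ(v)` again says that every
edge leaving `S` ends at `v`. An edge of `δ(S)` gives a neighbour of `v` in `S`, an edge of
`δ(v) \ δ(S)` a neighbour outside `S`, and a path between them in `G - v` would have to leave `S`
along an edge avoiding `v`. -/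

lemma mem_edgeCut_iff [Fintype V] (G : SimpleGraph V) (S : Set V) (a b : V) :
    s(a, b) ∈ edgeCut G S ↔ G.Adj a b ∧ (a ∈ S ↔ b ∉ S) := by
  simp only [edgeCut, Finset.mem_filter, SimpleGraph.mem_edgeFinset, SimpleGraph.mem_edgeSet,
    Sym2.eq_iff]
  refine ⟨fun ⟨h, h2⟩ => ⟨h, h2 a b (.inl ⟨rfl, rfl⟩)⟩, fun ⟨h, h2⟩ => ⟨h, ?_⟩⟩
  rintro u w (⟨rfl, rfl⟩ | ⟨rfl, rfl⟩) <;> tauto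

lemma mem_edgeCut_singleton_iff [Fintype V] (G : SimpleGraph V) (v a b : V) :
    s(a, b) ∈ edgeCut G {v} ↔ G.Adj a b ∧ (a = v ∨ b = v) := by
  rw [mem_edgeCut_iff, Set.mem_singleton_iff, Set.mem_singleton_iff]
  refine and_congr_right fun hab => ?_
  have := hab.ne
  constructor
  · tauto
  · rintro (rfl | rfl) <;> tauto

lemma edgeCut_compl [Fintype V] (G : SimpleGraph V) (S : Set V) :
    edgeCut G Sᶜ = edgeCut G S := by
  ext e
  induction e using Sym2.ind with
  | _ x y => simp only [mem_edgeCut_iff, Set.mem_compl_iff]; tauto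

lemma edgeCut_subset_edgeCut_singleton_iff [Fintype V] (G : SimpleGraph V) {S : Set V} {v : V}
    (hvS : v ∉ S) :
    edgeCut G S ⊆ edgeCut G {v} ↔ ∀ x y, G.Adj x y → x ∈ S → y ∉ S → y = v := by
  constructor
  · intro hsub x y hxy hx hy
    have hxy' : s(x, y) ∈ edgeCut G S := (mem_edgeCut_iff G S x y).2 ⟨hxy, by tauto⟩
    have := (mem_edgeCut_singleton_iff G v x y).1 (hsub hxy')
    have : x ≠ v := by rintro rfl; exact hvS hx
    tauto
  · intro h e
    induction e using Sym2.ind with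
    | _ x y =>
      rw [mem_edgeCut_iff, mem_edgeCut_singleton_iff]
      rintro ⟨hxy, hS⟩
      by_cases hx : x ∈ S
      · exact ⟨hxy, .inr (h x y hxy hx (hS.1 hx))⟩
      · exact ⟨hxy, .inl (h y x hxy.symm (by tauto) hx)⟩

lemma SimpleGraph.Reachable.exists_adj_mem_notMem {H : SimpleGraph V} {a b : V}
    (h : H.Reachable a b) {S : Set V} (ha : a ∈ S) (hb : b ∉ S) :
    ∃ x y, H.Adj x y ∧ x ∈ S ∧ y ∉ S := by
  obtain ⟨p⟩ := h
  obtain ⟨d, -, hd⟩ := p.exists_boundary_dart S ha hb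
  exact ⟨d.fst, d.snd, d.adj, hd⟩

lemma isCutVertex_of_edgeCut_ssubset [Fintype V] (G : SimpleGraph V) {S : Set V} {v : V}
    (hne : (edgeCut G S).Nonempty) (hss : edgeCut G S ⊂ edgeCut G {v}) : IsCutVertex G v := by
  wlog hvS : v ∉ S generalizing S
  · exact this (by rwa [edgeCut_compl]) (by rwa [edgeCut_compl]) (by simpa using hvS)
  have hleave := (edgeCut_subset_edgeCut_singleton_iff G hvS).1 hss.subset
  obtain ⟨u, hu, huv⟩ : ∃ u ∈ S, G.Adj u v := by
    obtain ⟨e, he⟩ := hne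
    induction e using Sym2.ind with
    | _ x y =>
      obtain ⟨hxy, hS⟩ := (mem_edgeCut_iff G S x y).1 he
      by_cases hx : x ∈ S
      · exact ⟨x, hx, hleave x y hxy hx (hS.1 hx) ▸ hxy⟩
      · exact ⟨y, by tauto, hleave y x hxy.symm (by tauto) hx ▸ hxy.symm⟩
  obtain ⟨w, hw, hvw⟩ : ∃ w ∉ S, G.Adj v w := by
    obtain ⟨e, hev, heS⟩ := Finset.exists_of_ssubset hss
    induction e using Sym2.ind with
    | _ x y =>
      obtain ⟨hxy, rfl | rfl⟩ := (mem_edgeCut_singleton_iff G v x y).1 hev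
      · exact ⟨y, fun hy => heS ((mem_edgeCut_iff G S _ _).2 ⟨hxy, by tauto⟩), hxy⟩
      · exact ⟨x, fun hx => heS ((mem_edgeCut_iff G S _ _).2 ⟨hxy, by tauto⟩), hxy.symm⟩
  intro hconn
  obtain ⟨x, y, hxy, hx, hy⟩ :=
    (hconn.preconnected ⟨u, huv.ne⟩ ⟨w, hvw.ne'⟩).exists_adj_mem_notMem
      (S := Subtype.val ⁻¹' S) hu hw
  exact y.2 (hleave x y hxy hx hy)

lemma IsCutVertex.exists_edgeCut_ssubset [Fintype V] [Nontrivial V] {G : SimpleGraph V} {v : V}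
    (hcut : IsCutVertex G v) (hG : G.Connected) :
    ∃ S : Set V, (edgeCut G S).Nonempty ∧ edgeCut G S ⊂ edgeCut G {v} := by
  set H := G.induce {u | u ≠ v}
  have : Nonempty {u | u ≠ v} := (exists_ne v).elim fun w hw => ⟨⟨w, hw⟩⟩
  obtain ⟨a, b, hab⟩ : ∃ a b, ¬H.Reachable a b := by
    simpa [IsCutVertex, SimpleGraph.connected_iff, SimpleGraph.Preconnected, this] using hcut
  set S : Set V := {x | ∃ hx : x ≠ v, H.Reachable a ⟨x, hx⟩}
  have ha : (a : V) ∈ S := ⟨a.2, .rfl⟩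
  have hb : (b : V) ∉ S := fun ⟨_, hr⟩ => hab hr
  have hvS : v ∉ S := fun ⟨hv, _⟩ => hv rfl
  have hleave : ∀ x y, G.Adj x y → x ∈ S → y ∉ S → y = v := by
    rintro x y hxy ⟨hx, hr⟩ hy
    by_contra hyv
    exact hy ⟨hyv, hr.trans (SimpleGraph.Adj.reachable (G := H) hxy)⟩
  have hsub := (edgeCut_subset_edgeCut_singleton_iff G hvS).2 hleave
  refine ⟨S, ?_, (Finset.ssubset_iff_of_subset hsub).2 ?_⟩
  · obtain ⟨x, y, hxy, hx, hy⟩ := (hG.preconnected a b).exists_adj_mem_notMem ha hb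
    exact ⟨s(x, y), (mem_edgeCut_iff G S x y).2 ⟨hxy, by tauto⟩⟩
  · obtain ⟨x, y, hxy, hx, hy⟩ := (hG.preconnected v b).exists_adj_mem_notMem
      (S := insert v S) (Set.mem_insert v S) fun h => h.elim b.2 hb
    simp only [Set.mem_insert_iff, not_or] at hx hy
    obtain rfl : x = v := hx.resolve_right fun hxS => hy.1 (hleave x y hxy hxS hy.2)
    exact ⟨s(x, y), (mem_edgeCut_singleton_iff G x x y).2 ⟨hxy, .inl rfl⟩,
      fun h => hvS (((mem_edgeCut_iff G S x y).1 h).2.2 hy.2)⟩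

/-- In a finite connected simple graph with at least two vertices,
`v` is a cut vertex iff `δ(v)` properly contains a nonempty induced edge cut, i.e.
there is `S ⊆ V` with `∅ ≠ δ(S) ⊊ δ(v)`. -/
theorem cutVertex_iff_proper_inducedEdgeCut [Fintype V] (G : SimpleGraph V)
    (hG : G.Connected) (hV : 2 ≤ Fintype.card V) (v : V) :
    IsCutVertex G v ↔
      ∃ S : Set V, (edgeCut G S).Nonempty ∧ edgeCut G S ⊂ edgeCut G {v} := by
  have : Nontrivial V := Fintype.one_lt_card_iff_nontrivial.1 hV
  exact ⟨fun hcut => hcut.exists_edgeCut_ssubset hG,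
    fun ⟨S, hne, hss⟩ => isCutVertex_of_edgeCut_ssubset G hne hss⟩
end
end

section
/- Let G = (V, E) be a finite connected undirected simple graph, let C be the edge set of a cycle in G, and let K be a cut class of G. If K ∩ C ≠ ∅, then K ⊆ C. -/
/-! Let `e ∈ K ∩ C` and suppose `f ∈ K` is not on `C`. Since `f` is not a cut edge, `G - f` is
connected, and it still contains the cycle `C`. An edge on a cycle is not a bridge, so
`G - f - e` is connected too, contradicting that `{e, f}` is a cut pair. -/

open scoped Classical symmDiff

noncomputable section

variable {V : Type*}

lemma SimpleGraph.Connected.connected_deleteEdges_of_isCycle_mem_edges {G : SimpleGraph V}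
    (hG : G.Connected) {u : V} {c : G.Walk u u} (hc : c.IsCycle) {e : Sym2 V} (he : e ∈ c.edges) :
    (G.deleteEdges {e}).Connected := by
  induction e using Sym2.ind with
  | _ x y =>
    exact hG.connected_delete_edge_of_not_isBridge fun hb ↦ hb.notMem_edges_of_isCycle hc he

open SimpleGraph in
lemma IsCutPair.mem_edges_of_mem_edges_isCycle {G : SimpleGraph V} {e f : Sym2 V}
    (hef : IsCutPair G e f) {u : V} {c : G.Walk u u} (hc : c.IsCycle) (he : e ∈ c.edges) :
    f ∈ c.edges := by
  obtain ⟨-, -, hfE, -, hf, hdisc⟩ := hef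
  by_contra hfc
  have hGf : (G.deleteEdges {f}).Connected := by_contra fun h ↦ hf ⟨hfE, h⟩
  have hc' : (c.toDeleteEdge f hfc).IsCycle := hc.toDeleteEdges G {f} _
  have hGfe := hGf.connected_deleteEdges_of_isCycle_mem_edges hc' (by rwa [Walk.edges_transfer])
  rw [deleteEdges_deleteEdges, Set.singleton_union, Set.pair_comm] at hGfe
  exact hdisc hGfe

theorem cutClass_subset_cycle_general [Fintype V] (G : SimpleGraph V)
    (K : Finset (Sym2 V)) (hK : IsCutClass G K)
    (C : Finset (Sym2 V)) (u : V) (w : G.Walk u u) (hw : w.IsCycle)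
    (hC : C = w.edges.toFinset)
    (hKC : (K ∩ C).Nonempty) :
    K ⊆ C := by
  obtain ⟨e, heKC⟩ := hKC
  obtain ⟨heK, heC⟩ := Finset.mem_inter.mp heKC
  subst hC
  intro f hfK
  rcases eq_or_ne e f with rfl | hef
  · exact heC
  exact List.mem_toFinset.mpr <|
    (hK.2.1 e heK f hfK hef).mem_edges_of_mem_edges_isCycle hw (List.mem_toFinset.mp heC)

/-- If `C` is the edge set of a cycle of a finite connected simple
graph `G` and `K` is a cut class of `G` with `K ∩ C ≠ ∅`, then `K ⊆ C`. -/
theorem cutClass_subset_cycle [Fintype V] (G : SimpleGraph V) (hG : G.Connected)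
    (K : Finset (Sym2 V)) (hK : IsCutClass G K)
    (C : Finset (Sym2 V)) (u : V) (w : G.Walk u u) (hw : w.IsCycle)
    (hC : C = w.edges.toFinset)
    (hKC : (K ∩ C).Nonempty) :
    K ⊆ C :=
  cutClass_subset_cycle_general G K hK C u w hw hC hKC
end
end

section
/- Let G = (V, E) be a finite connected undirected simple graph with no cut edges (i.e., 2-edge-connected), let T be a spanning tree of G, and let K be a cut class of G. Then there exists a non-tree edge e ∈ E \ E(T) such that K ⊆ C_e, where C_e is the fundamental cycle of e with respect to T. -/
/-!
Pick `f ∈ K`. As `f` is not a cut edge, it lies on a fundamental cycle: its own if `f ∉ T`;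
otherwise `G - f` is connected, so some edge of `G - f` joins the two components of `T - f`,
and that non-tree edge closes a cycle through `f`. Any cycle through `f` contains every
`g ∈ K`: if it avoided `g`, it would survive in `G - g`, so `f` would not be a bridge of the
connected graph `G - g`, and `G - {f, g}` would be connected.
-/

open scoped Classical symmDiff

noncomputable section

variable {V : Type*}

open SimpleGraph

namespace SimpleGraph

lemma IsBridge.exists_adj_notMem_edgeSet {G T : SimpleGraph V} {a b : V}
    (hT : T.IsBridge s(a, b)) (hG : (G.deleteEdges {s(a, b)}).Reachable a b) :
    ∃ u v, G.Adj u v ∧ s(u, v) ∉ T.edgeSet ∧ ¬(T.deleteEdges {s(a, b)}).Reachable u v := by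
  obtain ⟨w⟩ := hG
  obtain ⟨d, -, hu, hv⟩ :=
    w.exists_boundary_dart {x | (T.deleteEdges {s(a, b)}).Reachable a x} (Reachable.refl a) hT
  have hd := deleteEdges_adj.mp d.adj
  refine ⟨d.fst, d.snd, hd.1, fun hdT => hv (hu.trans ?_), fun h => hv (hu.trans h)⟩
  exact (deleteEdges_adj.mpr ⟨hdT, hd.2⟩).reachable

lemma Walk.IsPath.exists_isCycle_sup_fromEdgeSet {T : SimpleGraph V} {u v : V} {p : T.Walk v u}
    (hp : p.IsPath) (huv : u ≠ v) (he : s(u, v) ∉ T.edgeSet) :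
    ∃ c : (T ⊔ fromEdgeSet {s(u, v)}).Walk u u, c.IsCycle ∧ c.edges = s(u, v) :: p.edges := by
  have hadj : (T ⊔ fromEdgeSet {s(u, v)}).Adj u v := Or.inr ⟨rfl, huv⟩
  refine ⟨.cons hadj (p.mapLe le_sup_left), ?_, by simp⟩
  rw [Walk.cons_isCycle_iff, Walk.edges_mapLe_eq_edges]
  exact ⟨hp.mapLe le_sup_left, fun h => he (p.edges_subset_edgeSet h)⟩

lemma IsTree.exists_isCycle_sup_fromEdgeSet_of_not_isCutEdge {G T : SimpleGraph V}
    (hT : T.IsTree) {f : Sym2 V} (hf : f ∈ G.edgeSet) (hfc : ¬IsCutEdge G f) :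
    ∃ e ∈ G.edgeSet \ T.edgeSet, ∃ (u : V) (c : (T ⊔ fromEdgeSet {e}).Walk u u),
      c.IsCycle ∧ f ∈ c.edges := by
  induction f with | h a b => ?_
  have hab : G.Adj a b := hf
  by_cases hfT : s(a, b) ∈ T.edgeSet
  · have hGf : (G.deleteEdges {s(a, b)}).Reachable a b :=
      (not_and_not_right.mp hfc hf).preconnected a b
    obtain ⟨u, v, huv, huvT, hunreach⟩ :=
      (isAcyclic_iff_forall_isBridge.mp hT.isAcyclic hfT).exists_adj_notMem_edgeSet hGf
    obtain ⟨p, hp⟩ := hT.connected.exists_isPath v u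
    obtain ⟨c, hc, hce⟩ := hp.exists_isCycle_sup_fromEdgeSet huv.ne huvT
    refine ⟨s(u, v), ⟨huv, huvT⟩, u, c, hc, ?_⟩
    rw [hce]
    exact List.mem_cons_of_mem _ (p.mem_edges_of_not_reachable_deleteEdges fun h => hunreach h.symm)
  · obtain ⟨p, hp⟩ := hT.connected.exists_isPath b a
    obtain ⟨c, hc, hce⟩ := hp.exists_isCycle_sup_fromEdgeSet hab.ne hfT
    exact ⟨s(a, b), ⟨hab, hfT⟩, a, c, hc, hce ▸ List.mem_cons_self⟩

end SimpleGraph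

lemma IsCutPair.mem_edges_of_isCycle {G : SimpleGraph V} {f g : Sym2 V} (hfg : IsCutPair G f g)
    {u : V} {c : G.Walk u u} (hc : c.IsCycle) (hf : f ∈ c.edges) : g ∈ c.edges := by
  obtain ⟨-, -, hgG, -, hgc, hdisc⟩ := hfg
  by_contra hg
  have hGg : (G.deleteEdges {g}).Connected := not_and_not_right.mp hgc hgG
  have hcg : ∀ e ∈ c.edges, e ∉ ({g} : Set (Sym2 V)) := fun e he h => hg (h ▸ he)
  have hf_not_bridge : ¬(G.deleteEdges {g}).IsBridge f :=
    fun hb => hb.notMem_edges_of_isCycle (Walk.IsCycle.toDeleteEdges _ {g} hc hcg)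
      (by rwa [Walk.edges_transfer])
  induction f with | h a b => ?_
  apply hdisc
  have := hGg.connected_delete_edge_of_not_isBridge hf_not_bridge
  rwa [deleteEdges_deleteEdges, Set.union_comm, Set.singleton_union] at this

theorem cutClass_subset_fundamental_cycle_general [Fintype V] (G T : SimpleGraph V)
    (hT : IsSpanningTree G T)
    (K : Finset (Sym2 V)) (hK : IsCutClass G K) :
    ∃ e ∈ G.edgeFinset \ T.edgeFinset, ∃ (u : V)
      (w : (T ⊔ SimpleGraph.fromEdgeSet {e}).Walk u u),
        w.IsCycle ∧ K ⊆ w.edges.toFinset := by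
  obtain ⟨f, hfK, g, hgK, hfg⟩ := Finset.one_lt_card.mp hK.1
  obtain ⟨-, hfG, -, hf_not_cut, -⟩ := hK.2.1 f hfK g hgK hfg
  obtain ⟨e, ⟨heG, heT⟩, u, c, hc, hfc⟩ :=
    hT.2.exists_isCycle_sup_fromEdgeSet_of_not_isCutEdge hfG hf_not_cut
  have hle : T ⊔ fromEdgeSet {e} ≤ G := sup_le hT.1 ((fromEdgeSet_le G).mpr (by simp [heG]))
  refine ⟨e, by simp [heG, heT], u, c, hc, fun g hgK => List.mem_toFinset.mpr ?_⟩
  rcases eq_or_ne g f with rfl | hgf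
  · exact hfc
  · simpa using (hK.2.1 f hfK g hgK hgf.symm).mem_edges_of_isCycle (hc.mapLe hle)
      (by simpa using hfc)

/-- If `G` is a finite connected simple graph with no cut edges,
`T` a spanning tree of `G`, and `K` a cut class of `G`, then there is a non-tree edge
`e` whose fundamental cycle (the unique cycle of `T ∪ {e}`) contains `K`. -/
theorem cutClass_subset_fundamental_cycle [Fintype V] (G T : SimpleGraph V)
    (hG : G.Connected) (h2ec : ∀ e : Sym2 V, ¬IsCutEdge G e)
    (hT : IsSpanningTree G T)
    (K : Finset (Sym2 V)) (hK : IsCutClass G K) :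
    ∃ e ∈ G.edgeFinset \ T.edgeFinset, ∃ (u : V)
      (w : (T ⊔ SimpleGraph.fromEdgeSet {e}).Walk u u),
        w.IsCycle ∧ K ⊆ w.edges.toFinset :=
  cutClass_subset_fundamental_cycle_general G T hT K hK
end
end

section
/- Let G = (V, E) be a finite connected undirected simple graph, T a spanning tree of G, and e, f two distinct edges, neither of which is a cut edge. If {e, f} is not a cut pair, then there exists a non-tree edge g ∈ E \ E(T) whose fundamental cycle C_g contains exactly one of e and f, i.e., |C_g ∩ {e, f}| = 1. -/
/-!
Deleting a tree edge `h` splits the spanning tree `T` into two sides, and the fundamental cycle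
of a non-tree edge `g = xy` contains `h` exactly when `x` and `y` lie on different sides of
`T - h`; it contains no non-tree edge other than `g`. If the bipartitions of `V` cut out by `e`
and by `f` differ (a non-tree edge cutting out the trivial one), their symmetric difference is a
nontrivial cut of the connected graph `G - {e, f}`, and an edge of `G - {e, f}` crossing it is a
non-tree edge whose fundamental cycle meets exactly one of `e`, `f`. If the two bipartitions
agree, `e` and `f` are not both tree edges, and a non-tree one among them is the required edge.
-/

open scoped Classical symmDiff

noncomputable section

variable {V : Type*}

lemma Finset.card_inter_pair_eq_one_iff {α : Type*} [DecidableEq α] {A : Finset α} {a b : α}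
    (hab : a ≠ b) : (A ∩ {a, b}).card = 1 ↔ ¬(a ∈ A ↔ b ∈ A) := by
  by_cases ha : a ∈ A <;> by_cases hb : b ∈ A <;>
    simp [Finset.inter_insert_of_mem, Finset.inter_insert_of_notMem, ha, hb, hab]

namespace SimpleGraph

variable {T : SimpleGraph V}

lemma Connected.reachable_deleteEdges_or (hT : T.Connected) (a b z : V) :
    (T.deleteEdges {s(a, b)}).Reachable a z ∨ (T.deleteEdges {s(a, b)}).Reachable b z := by
  set H := T.deleteEdges {s(a, b)}
  have step : ∀ {u v : V} (_ : T.Walk u v), H.Reachable a v ∨ H.Reachable b v →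
      H.Reachable a u ∨ H.Reachable b u := by
    intro u v p
    induction p with
    | nil => exact id
    | @cons u c _ hadj _ ih =>
      intro hv
      by_cases huc : s(u, c) = s(a, b)
      · rcases Sym2.eq_iff.mp huc with ⟨rfl, -⟩ | ⟨rfl, -⟩
        exacts [.inl .rfl, .inr .rfl]
      · have huc' : H.Adj u c := by simp [H, hadj, huc]
        exact (ih hv).imp (·.trans huc'.reachable.symm) (·.trans huc'.reachable.symm)
  exact step (hT.preconnected z a).some (.inl .rfl)

lemma Connected.reachable_deleteEdges_of_not_reachable (hT : T.Connected) {h : Sym2 V}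
    {r x y : V} (hx : ¬(T.deleteEdges {h}).Reachable r x)
    (hy : ¬(T.deleteEdges {h}).Reachable r y) : (T.deleteEdges {h}).Reachable x y := by
  induction h using Sym2.ind with | h a b => ?_
  rcases hT.reachable_deleteEdges_or a b r with hr | hr
  · have hbx := (hT.reachable_deleteEdges_or a b x).resolve_left (hx <| hr.symm.trans ·)
    have hby := (hT.reachable_deleteEdges_or a b y).resolve_left (hy <| hr.symm.trans ·)
    exact hbx.symm.trans hby
  · have hax := (hT.reachable_deleteEdges_or a b x).resolve_right (hx <| hr.symm.trans ·)
    have hay := (hT.reachable_deleteEdges_or a b y).resolve_right (hy <| hr.symm.trans ·)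
    exact hax.symm.trans hay

/-- `T - h` has at most two components, so reachability in it is read off from the sides of a
fixed vertex `r`. -/
lemma Connected.reachable_deleteEdges_iff (hT : T.Connected) (h : Sym2 V) (r x y : V) :
    (T.deleteEdges {h}).Reachable x y ↔
      ((T.deleteEdges {h}).Reachable r x ↔ (T.deleteEdges {h}).Reachable r y) := by
  refine ⟨fun hxy => ⟨(·.trans hxy), (·.trans hxy.symm)⟩, fun hrxy => ?_⟩
  by_cases hrx : (T.deleteEdges {h}).Reachable r x
  · exact hrx.symm.trans (hrxy.mp hrx)
  · exact hT.reachable_deleteEdges_of_not_reachable hrx (mt hrxy.mpr hrx)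

lemma IsAcyclic.mem_edges_iff_not_reachable_deleteEdges (hT : T.IsAcyclic) {x y : V}
    {p : T.Walk x y} (hp : p.IsPath) (h : Sym2 V) :
    h ∈ p.edges ↔ ¬(T.deleteEdges {h}).Reachable x y := by
  refine ⟨fun hh hxy => ?_, p.mem_edges_of_not_reachable_deleteEdges⟩
  obtain ⟨q, hq⟩ := hxy.exists_isPath
  have hpq : p = q.mapLe (T.deleteEdges_le {h}) := congrArg Subtype.val <|
    (hT.subsingleton_path x y).elim ⟨p, hp⟩ ⟨_, hq.mapLe _⟩
  rw [hpq, Walk.edges_mapLe_eq_edges] at hh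
  simpa using q.edges_subset_edgeSet hh

lemma IsTree.exists_isCycle_sup_fromEdgeSet (hT : T.IsTree) {x y : V} (hxy : x ≠ y)
    (hg : s(x, y) ∉ T.edgeSet) :
    ∃ w : (T ⊔ fromEdgeSet {s(x, y)}).Walk x x, w.IsCycle ∧
      ∀ h, h ∈ w.edges ↔ h = s(x, y) ∨ ¬(T.deleteEdges {h}).Reachable x y := by
  obtain ⟨p, hp⟩ := (hT.connected.preconnected y x).exists_isPath
  have hadj : (T ⊔ fromEdgeSet {s(x, y)}).Adj x y := by simp [hxy]
  let q : (T ⊔ fromEdgeSet {s(x, y)}).Walk y x := p.mapLe le_sup_left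
  have hgq : s(x, y) ∉ q.edges := by
    rw [Walk.edges_mapLe_eq_edges]
    exact fun h => hg (p.edges_subset_edgeSet h)
  refine ⟨.cons hadj q, Path.cons_isCycle ⟨q, hp.mapLe _⟩ hadj hgq, fun h => ?_⟩
  rw [Walk.edges_cons, List.mem_cons, Walk.edges_mapLe_eq_edges,
    hT.isAcyclic.mem_edges_iff_not_reachable_deleteEdges hp, reachable_comm]

lemma Connected.exists_adj_of_not_reachable_deleteEdges_iff (hT : T.Connected)
    {H : SimpleGraph V} (hH : H.Preconnected) {e f : Sym2 V} {x y : V}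
    (hxy : ¬((T.deleteEdges {e}).Reachable x y ↔ (T.deleteEdges {f}).Reachable x y)) :
    ∃ u v, H.Adj u v ∧
      ¬((T.deleteEdges {e}).Reachable u v ↔ (T.deleteEdges {f}).Reachable u v) := by
  obtain ⟨d, -, hd₁, hd₂⟩ := (hH x y).some.exists_boundary_dart
    {z | (T.deleteEdges {e}).Reachable x z ↔ (T.deleteEdges {f}).Reachable x z}
    (iff_of_true .rfl .rfl) hxy
  refine ⟨d.fst, d.snd, d.adj, ?_⟩
  rw [hT.reachable_deleteEdges_iff e x, hT.reachable_deleteEdges_iff f x]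
  simp only [Set.mem_ofPred_eq] at hd₁ hd₂
  tauto

end SimpleGraph

section FundamentalCycle

open SimpleGraph

variable {G T : SimpleGraph V} {e f : Sym2 V}

lemma exists_nontree_adj_of_forall_reachable_deleteEdges_iff (hT : T.IsTree) (hef : e ≠ f)
    (he : e ∈ G.edgeSet) (hf : f ∈ G.edgeSet)
    (hc : ∀ x y, (T.deleteEdges {e}).Reachable x y ↔ (T.deleteEdges {f}).Reachable x y) :
    ∃ x y, G.Adj x y ∧ s(x, y) ∉ T.edgeSet ∧
      ¬((e = s(x, y) ∨ ¬(T.deleteEdges {e}).Reachable x y) ↔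
        (f = s(x, y) ∨ ¬(T.deleteEdges {f}).Reachable x y)) := by
  wlog heT : e ∉ T.edgeSet generalizing e f with H
  · by_cases hfT : f ∈ T.edgeSet
    · induction f using Sym2.ind with | h a b => ?_
      have hab : (T.deleteEdges {e}).Adj a b := by simp_all [eq_comm]
      exact absurd ((hc a b).mp hab.reachable)
        (isAcyclic_iff_forall_adj_isBridge.mp hT.isAcyclic hfT)
    · obtain ⟨x, y, hxy, hgT, hsep⟩ := H hef.symm hf he (fun x y => (hc x y).symm) hfT
      exact ⟨x, y, hxy, hgT, fun h => hsep h.symm⟩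
  induction e using Sym2.ind with | h x y => ?_
  have hTe : T.deleteEdges {s(x, y)} = T :=
    deleteEdges_eq_self.mpr (Set.disjoint_singleton_right.mpr heT)
  have hRf := (hc x y).mp (by rw [hTe]; exact hT.connected.preconnected x y)
  exact ⟨x, y, he, heT, by simp [hef.symm, hRf]⟩

lemma exists_nontree_adj_of_connected_deleteEdges (hT : T.IsTree) (hef : e ≠ f)
    (he : e ∈ G.edgeSet) (hf : f ∈ G.edgeSet) (hD : (G.deleteEdges {e, f}).Connected) :
    ∃ x y, G.Adj x y ∧ s(x, y) ∉ T.edgeSet ∧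
      ¬((e = s(x, y) ∨ ¬(T.deleteEdges {e}).Reachable x y) ↔
        (f = s(x, y) ∨ ¬(T.deleteEdges {f}).Reachable x y)) := by
  by_cases hc : ∀ x y, (T.deleteEdges {e}).Reachable x y ↔ (T.deleteEdges {f}).Reachable x y
  · exact exists_nontree_adj_of_forall_reachable_deleteEdges_iff hT hef he hf hc
  simp only [not_forall] at hc
  obtain ⟨x, y, hxy⟩ := hc
  obtain ⟨u, v, huv, hsep⟩ :=
    hT.connected.exists_adj_of_not_reachable_deleteEdges_iff hD.preconnected hxy
  simp only [deleteEdges_adj, Set.mem_insert_iff, Set.mem_singleton_iff, not_or] at huv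
  obtain ⟨huvG, hne, hnf⟩ := huv
  have huvT : s(u, v) ∉ T.edgeSet := fun huvT => hsep <| iff_of_true
    (Adj.reachable (by simpa [hne] using huvT)) (Adj.reachable (by simpa [hnf] using huvT))
  exact ⟨u, v, huvG, huvT, by simpa [Ne.symm hne, Ne.symm hnf, not_iff_not] using hsep⟩

end FundamentalCycle

theorem fundamental_cycle_separates_non_cutPair_general [Fintype V] (G T : SimpleGraph V)
    (hT : IsSpanningTree G T)
    (e f : Sym2 V) (hef : e ≠ f) (he : e ∈ G.edgeSet) (hf : f ∈ G.edgeSet)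
    (hce : ¬IsCutEdge G e) (hcf : ¬IsCutEdge G f) (hnp : ¬IsCutPair G e f) :
    ∃ g ∈ G.edgeFinset \ T.edgeFinset, ∃ (u : V)
      (w : (T ⊔ SimpleGraph.fromEdgeSet {g}).Walk u u),
        w.IsCycle ∧ (w.edges.toFinset ∩ ({e, f} : Finset (Sym2 V))).card = 1 := by
  have hD : (G.deleteEdges {e, f}).Connected := by
    by_contra h
    exact hnp ⟨hef, he, hf, hce, hcf, h⟩
  obtain ⟨x, y, hxy, hgT, hsep⟩ := exists_nontree_adj_of_connected_deleteEdges hT.2 hef he hf hD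
  obtain ⟨w, hw, hwC⟩ := hT.2.exists_isCycle_sup_fromEdgeSet hxy.ne hgT
  refine ⟨s(x, y), by simpa [hxy] using hgT, x, w, hw, ?_⟩
  rw [Finset.card_inter_pair_eq_one_iff hef]
  simpa [hwC] using hsep

/-- Let `T` be a spanning tree of a finite connected simple graph `G`
and `e, f` distinct non-cut edges. If `{e, f}` is not a cut pair, then some non-tree
edge `g` has a fundamental cycle (the unique cycle of `T ∪ {g}`) containing exactly one
of `e` and `f`. -/
theorem fundamental_cycle_separates_non_cutPair [Fintype V] (G T : SimpleGraph V)
    (hG : G.Connected) (hT : IsSpanningTree G T)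
    (e f : Sym2 V) (hef : e ≠ f) (he : e ∈ G.edgeSet) (hf : f ∈ G.edgeSet)
    (hce : ¬IsCutEdge G e) (hcf : ¬IsCutEdge G f) (hnp : ¬IsCutPair G e f) :
    ∃ g ∈ G.edgeFinset \ T.edgeFinset, ∃ (u : V)
      (w : (T ⊔ SimpleGraph.fromEdgeSet {g}).Walk u u),
        w.IsCycle ∧ (w.edges.toFinset ∩ ({e, f} : Finset (Sym2 V))).card = 1 :=
  fundamental_cycle_separates_non_cutPair_general G T hT e f hef he hf hce hcf hnp
end
end

section
/- Let G = (V, E) be a finite connected undirected simple graph, T a spanning tree of G, E_C the set of all cut edges of G, and E'_C a set of edges with E_C ⊆ E'_C ⊆ E(T). If E'_C \ E_C is nonempty, then there exists a non-tree edge of G (an edge in E \ E(T)) whose two endpoints lie in different connected components of T − E'_C. Conversely, if E'_C = E_C, then every non-tree edge of G has both endpoints in the same connected component of T − E'_C. -/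
/-
For an edge `e = ab` of `E'_C \ E_C`, the graph `G − e` is still connected while `a` and `b`
lie in different components of the tree `T − e`; a walk from `a` to `b` in `G − e` must leave
the component of `a` along some edge, and that edge is a non-tree edge whose endpoints are
separated already in `T − e`, hence in `T − E'_C`.
Conversely, the tree path between the endpoints of a non-tree edge closes up with that edge
to a cycle of `G`, so none of its edges is a bridge; when `E'_C = E_C` the path survives in
`T − E'_C`.
-/

open scoped Classical symmDiff

noncomputable section

variable {V : Type*}

namespace SimpleGraph

variable {G H : SimpleGraph V}

lemma isCutEdge_iff_isBridge (hG : G.Connected) {e : Sym2 V} :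
    IsCutEdge G e ↔ e ∈ G.edgeSet ∧ G.IsBridge e := by
  induction e using Sym2.ind with
  | _ a b =>
  refine and_congr_right fun _ => ⟨fun hdisc hreach => ?_, fun hbridge hconn => ?_⟩
  · exact hdisc (hG.connected_delete_edge_of_not_isBridge fun hbridge => hbridge hreach)
  · exact hbridge (hconn.preconnected a b)

lemma Reachable.exists_adj_not_reachable {a b : V} (h : G.Reachable a b)
    (h' : ¬H.Reachable a b) : ∃ u v, G.Adj u v ∧ ¬H.Reachable u v := by
  obtain ⟨p⟩ := h
  obtain ⟨d, -, hd₁, hd₂⟩ :=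
    p.exists_boundary_dart {x | H.Reachable a x} (Reachable.refl a) h'
  exact ⟨d.fst, d.snd, d.adj, fun hd => hd₂ (Reachable.trans hd₁ hd)⟩

lemma Walk.IsPath.not_isBridge_of_mem_edges {u v : V} {p : G.Walk u v} (hp : p.IsPath)
    (hvu : G.Adj v u) (hvu' : s(v, u) ∉ p.edges) {e : Sym2 V} (he : e ∈ p.edges) :
    ¬G.IsBridge e := fun hbridge =>
  hbridge.notMem_edges_of_isCycle (Path.cons_isCycle ⟨p, hp⟩ hvu hvu') (by simp [he])

lemma Connected.reachable_deleteEdges_of_adj {T : SimpleGraph V} (hT : T.Connected)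
    (hTG : T ≤ G) {u v : V} (hGuv : G.Adj u v) (hTuv : ¬T.Adj u v) {E : Set (Sym2 V)}
    (hE : ∀ e ∈ E, G.IsBridge e) : (T.deleteEdges E).Reachable u v := by
  obtain ⟨p, hp⟩ := hT.exists_isPath u v
  have hvu : s(v, u) ∉ (p.mapLe hTG).edges := by
    rw [Walk.edges_mapLe_eq_edges]
    exact fun h => hTuv (T.mem_edgeSet.mp (p.edges_subset_edgeSet h)).symm
  refine ⟨p.toDeleteEdges E fun e he heE => ?_⟩
  refine ((Walk.isPath_mapLe hTG).mpr hp).not_isBridge_of_mem_edges hGuv.symm hvu ?_ (hE e heE)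
  rwa [Walk.edges_mapLe_eq_edges]

end SimpleGraph

open SimpleGraph

theorem verifier_for_cut_edges_general (G T : SimpleGraph V)
    (hG : G.Connected) (hT : IsSpanningTree G T)
    (E'C : Set (Sym2 V))
    (htree : E'C ⊆ T.edgeSet) :
    ((E'C \ {e : Sym2 V | IsCutEdge G e}).Nonempty →
      ∃ u v : V, G.Adj u v ∧ ¬T.Adj u v ∧ ¬(T.deleteEdges E'C).Reachable u v) ∧
    (E'C = {e : Sym2 V | IsCutEdge G e} →
      ∀ u v : V, G.Adj u v → ¬T.Adj u v → (T.deleteEdges E'C).Reachable u v) := by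
  obtain ⟨hTG, hTtree⟩ := hT
  constructor
  · rintro ⟨e, heE, hecut⟩
    induction e using Sym2.ind with
    | _ a b =>
    have hTab : T.Adj a b := htree heE
    have hGreach : (G.deleteEdges {s(a, b)}).Reachable a b := by
      by_contra h
      exact hecut ((isCutEdge_iff_isBridge hG).mpr ⟨hTG hTab, h⟩)
    have hTbridge : T.IsBridge s(a, b) :=
      isAcyclic_iff_forall_adj_isBridge.mp hTtree.isAcyclic hTab
    obtain ⟨u, v, huv, hsep⟩ := hGreach.exists_adj_not_reachable hTbridge
    rw [deleteEdges_adj, Set.mem_singleton_iff] at huv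
    refine ⟨u, v, huv.1, fun hTuv => hsep ?_, fun hreach => hsep ?_⟩
    · exact Adj.reachable ((deleteEdges_adj ..).mpr ⟨hTuv, huv.2⟩)
    · exact hreach.mono (deleteEdges_anti (Set.singleton_subset_iff.mpr heE))
  · rintro rfl u v hGuv hTuv
    exact hTtree.connected.reachable_deleteEdges_of_adj hTG hGuv hTuv
      fun e hcut => ((isCutEdge_iff_isBridge hG).mp hcut).2

/-- Let `T` be a spanning tree of a finite connected simple graph `G`,
`E_C` the set of cut edges of `G`, and `E_C ⊆ E'_C ⊆ E(T)`. If `E'_C \ E_C` is nonempty,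
some non-tree edge of `G` has its endpoints in different components of `T − E'_C`;
conversely, if `E'_C = E_C`, every non-tree edge of `G` has both endpoints in the same
component of `T − E'_C`. -/
theorem verifier_for_cut_edges [Fintype V] (G T : SimpleGraph V)
    (hG : G.Connected) (hT : IsSpanningTree G T)
    (E'C : Set (Sym2 V))
    (hsub : {e : Sym2 V | IsCutEdge G e} ⊆ E'C) (htree : E'C ⊆ T.edgeSet) :
    ((E'C \ {e : Sym2 V | IsCutEdge G e}).Nonempty →
      ∃ u v : V, G.Adj u v ∧ ¬T.Adj u v ∧ ¬(T.deleteEdges E'C).Reachable u v) ∧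
    (E'C = {e : Sym2 V | IsCutEdge G e} →
      ∀ u v : V, G.Adj u v → ¬T.Adj u v → (T.deleteEdges E'C).Reachable u v) :=
  verifier_for_cut_edges_general G T hG hT E'C htree
end
end
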